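/- arXiv:1203.3953 — 3 statements merged into one kernel-verified Lean document; each statement's English description precedes it below -/
import Mathlib

section
/- Let P be an n×n complex orthogonal projector (P = P* = P²) of rank n_e, where n = n_b·n_e for a positive integer n_b, and suppose there is c > 0 such that |P_{ij}| ≤ c/(|i−j| + 1) for all i, j. Then for every integer m with 0 ≤ m < n−1, the m-banded truncation P^(m) satisfies ‖P − P^(m)‖_F² / ‖P‖_F² < 2c²·(n_b + 1)/(m + 1). Consequently, for every ε > 0 there is an integer m̄ depending only on c, n_b and ε (not on n) such that ‖P − P^(m)‖_F/‖P‖_F ≤ ε for all m ≥ m̄. -/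
/-- The `m`-banded truncation `A^(m)` of a square matrix `A`:
`[A^(m)]_{ij} = A_{ij}` if `|i-j| ≤ m` and `0` otherwise. -/
def bandTrunc {n : ℕ} (A : Matrix (Fin n) (Fin n) ℂ) (m : ℕ) : Matrix (Fin n) (Fin n) ℂ :=
  fun i j => if |(i : ℤ) - (j : ℤ)| ≤ (m : ℤ) then A i j else 0

/-! Since `P` is Hermitian and idempotent, `‖P‖_F² = Tr (P P*) = Tr P = rank P = n_e`.
Off the band the decay bound gives `|P_ij|² ≤ c² / (|i - j| + 1)²`; a row has at most two
entries at each distance `d`, and `∑_{d > m} 1 / (d + 1)² ≤ 1 / (m + 1)` by telescoping, so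
every row of `P - P^(m)` has squared norm at most `2c² / (m + 1)`. Hence
`‖P - P^(m)‖_F² ≤ 2c² n / (m + 1) = 2c² n_b n_e / (m + 1)`, which gives both claims
(the second with `m̄ = ⌈2c² n_b / ε²⌉`). -/

open Finset
open scoped Matrix

theorem Matrix.trace_eq_rank_of_isIdempotentElem {ι K : Type*} [Fintype ι] [DecidableEq ι]
    [Field K] {P : Matrix ι ι K} (hP : IsIdempotentElem P) : P.trace = P.rank := by
  have hproj := (LinearMap.isProj_range_iff_isIdempotentElem P.mulVecLin).mpr
    (by rw [IsIdempotentElem, Module.End.mul_eq_comp, ← Matrix.mulVecLin_mul, hP.eq])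
  rw [← Matrix.trace_toLin'_eq, Matrix.toLin'_apply', hproj.trace, Matrix.rank]

theorem Matrix.sum_norm_sq_eq_re_trace_mul_conjTranspose {ι κ : Type*} [Fintype ι] [Fintype κ]
    (A : Matrix ι κ ℂ) : ∑ i, ∑ j, ‖A i j‖ ^ 2 = (A * Aᴴ).trace.re := by
  simp [Matrix.trace, Matrix.mul_apply, Complex.re_sum, Complex.mul_conj, Complex.sq_norm]

theorem Matrix.IsHermitian.sum_norm_sq_eq_rank_of_isIdempotentElem {ι : Type*} [Fintype ι]
    [DecidableEq ι] {P : Matrix ι ι ℂ} (hH : P.IsHermitian) (hP : IsIdempotentElem P) :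
    ∑ i, ∑ j, ‖P i j‖ ^ 2 = P.rank := by
  rw [P.sum_norm_sq_eq_re_trace_mul_conjTranspose, hH.eq, hP.eq,
    Matrix.trace_eq_rank_of_isIdempotentElem hP, Complex.natCast_re]

theorem card_filter_natAbs_sub_eq_le_two {n : ℕ} (i : Fin n) (d : ℕ) :
    #{j : Fin n | ((i : ℤ) - j).natAbs = d} ≤ 2 := by
  calc #{j : Fin n | ((i : ℤ) - j).natAbs = d}
      ≤ #(univ : Finset Bool) := by
        refine card_le_card_of_injOn (fun j => decide (j ≤ i)) (fun _ _ => mem_univ _) ?_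
        intro j hj k hk hjk
        simp only [coe_filter, mem_univ, true_and, Set.mem_ofPred_eq] at hj hk
        simp only [decide_eq_decide, Fin.le_def] at hjk
        ext; omega
    _ = 2 := rfl

theorem sum_natAbs_sub_le_two_mul_sum_range {n : ℕ} {F : ℕ → ℝ} (hF : ∀ d, 0 ≤ F d)
    (i : Fin n) : ∑ j : Fin n, F ((i : ℤ) - j).natAbs ≤ 2 * ∑ d ∈ range n, F d := by
  have hsub : univ.image (fun j : Fin n => ((i : ℤ) - j).natAbs) ⊆ range n := by
    intro d hd
    obtain ⟨j, -, rfl⟩ := mem_image.mp hd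
    have := i.isLt; have := j.isLt
    simp only [mem_range]; omega
  rw [sum_comp, mul_sum]
  calc _ ≤ ∑ d ∈ univ.image (fun j : Fin n => ((i : ℤ) - j).natAbs), 2 * F d := by
        refine sum_le_sum fun d _ => ?_
        rw [nsmul_eq_mul]
        gcongr
        · exact hF d
        · exact_mod_cast card_filter_natAbs_sub_eq_le_two i d
    _ ≤ ∑ d ∈ range n, 2 * F d :=
        sum_le_sum_of_subset_of_nonneg hsub fun d _ _ => mul_nonneg zero_le_two (hF d)

theorem sum_Ico_inv_succ_sq_le (m n : ℕ) :
    ∑ d ∈ Ico (m + 1) n, 1 / ((d : ℝ) + 1) ^ 2 ≤ 1 / ((m : ℝ) + 1) := by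
  rcases le_or_gt n (m + 1) with h | h
  · rw [Ico_eq_empty_of_le h, sum_empty]; positivity
  -- `1 / (d + 1) ^ 2 ≤ 1 / d - 1 / (d + 1)` telescopes
  have step : ∀ d ∈ Ico (m + 1) n,
      1 / ((d : ℝ) + 1) ^ 2 ≤ -(1 / ((d + 1 : ℕ) : ℝ)) - -(1 / (d : ℕ)) := by
    intro d hd
    have hd : (0 : ℝ) < d := by exact_mod_cast (by simp at hd; omega : 0 < d)
    push_cast
    rw [neg_sub_neg, div_sub_div _ _ hd.ne' (by positivity),
      div_le_div_iff₀ (by positivity) (by positivity)]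
    nlinarith
  calc _ ≤ _ := sum_le_sum step
    _ = 1 / ((m : ℝ) + 1) - 1 / n := by
        rw [sum_Ico_sub (fun d : ℕ => -(1 / (d : ℝ))) h.le]; push_cast; ring
    _ ≤ 1 / ((m : ℝ) + 1) := sub_le_self _ (by positivity)

theorem sub_bandTrunc_apply {n : ℕ} (A : Matrix (Fin n) (Fin n) ℂ) (m : ℕ) (i j : Fin n) :
    (A - bandTrunc A m) i j = if m < ((i : ℤ) - j).natAbs then A i j else 0 := by
  simp only [Matrix.sub_apply, bandTrunc, Int.abs_eq_natAbs, ← not_lt, Nat.cast_lt]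
  split_ifs <;> simp

theorem sum_norm_sq_sub_bandTrunc_le {n : ℕ} {c : ℝ} (A : Matrix (Fin n) (Fin n) ℂ)
    (hA : ∀ i j : Fin n, ‖A i j‖ ≤ c / (|(i : ℝ) - (j : ℝ)| + 1)) (m : ℕ) :
    ∑ i, ∑ j, ‖(A - bandTrunc A m) i j‖ ^ 2 ≤ n * (2 * c ^ 2 / ((m : ℝ) + 1)) := by
  set F : ℕ → ℝ := fun d => if m < d then 1 / ((d : ℝ) + 1) ^ 2 else 0
  have hF : ∀ d, 0 ≤ F d := fun d => by dsimp only [F]; split_ifs <;> positivity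
  have entry (i j : Fin n) : ‖(A - bandTrunc A m) i j‖ ^ 2 ≤ c ^ 2 * F ((i : ℤ) - j).natAbs := by
    rw [sub_bandTrunc_apply]
    dsimp only [F]
    split_ifs
    · have hij : |(i : ℝ) - (j : ℝ)| = ((i : ℤ) - j).natAbs := by
        rw [Nat.cast_natAbs]; push_cast; rfl
      calc ‖A i j‖ ^ 2 ≤ (c / (|(i : ℝ) - (j : ℝ)| + 1)) ^ 2 :=
            pow_le_pow_left₀ (norm_nonneg _) (hA i j) 2
        _ = _ := by rw [hij, div_pow]; ring
    · simp
  have sum_F : ∑ d ∈ range n, F d ≤ 1 / ((m : ℝ) + 1) := by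
    rw [← sum_filter]
    refine le_of_eq_of_le (sum_congr ?_ fun _ _ => rfl) (sum_Ico_inv_succ_sq_le m n)
    ext d; simp only [mem_filter, mem_range, mem_Ico]; omega
  have row (i : Fin n) : ∑ j, ‖(A - bandTrunc A m) i j‖ ^ 2 ≤ 2 * c ^ 2 / ((m : ℝ) + 1) :=
    calc ∑ j, ‖(A - bandTrunc A m) i j‖ ^ 2
        ≤ ∑ j : Fin n, c ^ 2 * F ((i : ℤ) - j).natAbs := sum_le_sum fun j _ => entry i j
      _ = c ^ 2 * ∑ j : Fin n, F ((i : ℤ) - j).natAbs := (mul_sum _ _ _).symm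
      _ ≤ c ^ 2 * (2 * ∑ d ∈ range n, F d) := by
          gcongr; exact sum_natAbs_sub_le_two_mul_sum_range hF i
      _ ≤ c ^ 2 * (2 * (1 / ((m : ℝ) + 1))) := by gcongr
      _ = 2 * c ^ 2 / ((m : ℝ) + 1) := by ring
  calc _ ≤ ∑ _i : Fin n, 2 * c ^ 2 / ((m : ℝ) + 1) := sum_le_sum fun i _ => row i
    _ = _ := by simp

theorem Matrix.IsHermitian.sum_norm_sq_sub_bandTrunc_div_le {n n_b : ℕ} {c : ℝ}
    {P : Matrix (Fin n) (Fin n) ℂ} (hH : P.IsHermitian) (hP : IsIdempotentElem P)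
    (hn : n = n_b * P.rank) (hP_decay : ∀ i j : Fin n, ‖P i j‖ ≤ c / (|(i : ℝ) - (j : ℝ)| + 1))
    (m : ℕ) :
    (∑ i, ∑ j, ‖(P - bandTrunc P m) i j‖ ^ 2) / (∑ i, ∑ j, ‖P i j‖ ^ 2)
      ≤ 2 * c ^ 2 * n_b / ((m : ℝ) + 1) := by
  have hn : (n : ℝ) = n_b * P.rank := by exact_mod_cast hn
  rw [hH.sum_norm_sq_eq_rank_of_isIdempotentElem hP]
  refine div_le_of_le_mul₀ (Nat.cast_nonneg _) (by positivity) ?_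
  calc _ ≤ (n : ℝ) * (2 * c ^ 2 / ((m : ℝ) + 1)) := sum_norm_sq_sub_bandTrunc_le P hP_decay m
    _ = _ := by rw [hn]; ring

theorem stmt_5_general (c : ℝ) (hc : 0 < c) (n_b : ℕ) :
    (∀ (n n_e : ℕ), n = n_b * n_e →
      ∀ P : Matrix (Fin n) (Fin n) ℂ, P.IsHermitian → P * P = P → P.rank = n_e →
      (∀ i j : Fin n, ‖P i j‖ ≤ c / (|(i : ℝ) - (j : ℝ)| + 1)) →
      ∀ m : ℕ, m < n - 1 →
        (∑ i : Fin n, ∑ j : Fin n, ‖(P - bandTrunc P m) i j‖ ^ 2) /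
          (∑ i : Fin n, ∑ j : Fin n, ‖P i j‖ ^ 2)
          < 2 * c ^ 2 * ((n_b : ℝ) + 1) / ((m : ℝ) + 1)) ∧
    (∀ ε : ℝ, 0 < ε → ∃ mbar : ℕ,
      ∀ (n n_e : ℕ), n = n_b * n_e →
      ∀ P : Matrix (Fin n) (Fin n) ℂ, P.IsHermitian → P * P = P → P.rank = n_e →
      (∀ i j : Fin n, ‖P i j‖ ≤ c / (|(i : ℝ) - (j : ℝ)| + 1)) →
      ∀ m : ℕ, mbar ≤ m →
        Real.sqrt (∑ i : Fin n, ∑ j : Fin n, ‖(P - bandTrunc P m) i j‖ ^ 2) /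
          Real.sqrt (∑ i : Fin n, ∑ j : Fin n, ‖P i j‖ ^ 2) ≤ ε) := by
  refine ⟨fun n n_e hn P hH hP hrank hP_decay m _ => ?_, fun ε hε => ?_⟩
  · refine (hH.sum_norm_sq_sub_bandTrunc_div_le hP (hrank ▸ hn) hP_decay m).trans_lt ?_
    gcongr
    linarith
  · refine ⟨⌈2 * c ^ 2 * n_b / ε ^ 2⌉₊, fun n n_e hn P hH hP hrank hP_decay m hm => ?_⟩
    have hm : 2 * c ^ 2 * n_b / ε ^ 2 ≤ (m : ℝ) + 1 :=
      (Nat.le_ceil _).trans (by exact_mod_cast hm.trans m.le_succ)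
    have hratio := (hH.sum_norm_sq_sub_bandTrunc_div_le hP (hrank ▸ hn) hP_decay m).trans
      (div_le_of_le_mul₀ (by positivity) (by positivity) ((div_le_iff₀' (by positivity)).mp hm))
    rw [← Real.sqrt_div (by positivity)]
    exact (Real.sqrt_le_sqrt hratio).trans_eq (Real.sqrt_sq hε.le)

/-- Let `P` be an `n×n` orthogonal projector of rank `n_e`, `n = n_b·n_e`, with
`|P_{ij}| ≤ c/(|i−j|+1)`. Then for `0 ≤ m < n−1` the `m`-banded truncation satisfies
`‖P − P^(m)‖_F²/‖P‖_F² < 2c²·(n_b+1)/(m+1)`, and consequently for every `ε > 0` there is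
`m̄` depending only on `c`, `n_b`, `ε` (not on `n`) with `‖P − P^(m)‖_F/‖P‖_F ≤ ε` for all
`m ≥ m̄`. -/
theorem stmt_5 (c : ℝ) (hc : 0 < c) (n_b : ℕ) (hnb : 0 < n_b) :
    (∀ (n n_e : ℕ), n = n_b * n_e →
      ∀ P : Matrix (Fin n) (Fin n) ℂ, P.IsHermitian → P * P = P → P.rank = n_e →
      (∀ i j : Fin n, ‖P i j‖ ≤ c / (|(i : ℝ) - (j : ℝ)| + 1)) →
      ∀ m : ℕ, m < n - 1 →
        (∑ i : Fin n, ∑ j : Fin n, ‖(P - bandTrunc P m) i j‖ ^ 2) /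
          (∑ i : Fin n, ∑ j : Fin n, ‖P i j‖ ^ 2)
          < 2 * c ^ 2 * ((n_b : ℝ) + 1) / ((m : ℝ) + 1)) ∧
    (∀ ε : ℝ, 0 < ε → ∃ mbar : ℕ,
      ∀ (n n_e : ℕ), n = n_b * n_e →
      ∀ P : Matrix (Fin n) (Fin n) ℂ, P.IsHermitian → P * P = P → P.rank = n_e →
      (∀ i j : Fin n, ‖P i j‖ ≤ c / (|(i : ℝ) - (j : ℝ)| + 1)) →
      ∀ m : ℕ, mbar ≤ m →
        Real.sqrt (∑ i : Fin n, ∑ j : Fin n, ‖(P - bandTrunc P m) i j‖ ^ 2) /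
          Real.sqrt (∑ i : Fin n, ∑ j : Fin n, ‖P i j‖ ^ 2) ≤ ε) :=
  stmt_5_general c hc n_b
end

section
/- Let 0 < a < b and I = [−b,−a] ∪ [a,b]. Let f be continuous on I such that the restriction of f to [−b,−a] is the restriction of a function f₁ analytic on the open left half-plane {Re z < 0}, and the restriction of f to [a,b] is the restriction of a function f₂ analytic on the open right half-plane {Re z > 0}. Then for every ξ with 1 < ξ < ξ̄ := (a+b)/(b−a), there exists a constant C > 0, independent of k, such that E_k(f,I) ≤ C·ξ^{−k/2} for all integers k ≥ 0. -/
/-- The best polynomial approximation error `E_k(f,S)`: the infimum over real polynomials `p`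
of degree at most `k` of `max_{x ∈ S} |f(x) − p(x)|`. -/
noncomputable def bestApproxError (f : ℝ → ℝ) (S : Set ℝ) (k : ℕ) : ℝ :=
  sInf {e : ℝ | ∃ p : Polynomial ℝ, p.natDegree ≤ k ∧
    e = sSup ((fun x => |f x - p.eval x|) '' S)}

/-!
On `I` write `f x = g (x ^ 2) + x * h (x ^ 2)`, where `g y = (f₂ √y + f₁ (-√y)) / 2` and
`h y = (f₂ √y - f₁ (-√y)) / (2 √y)` are holomorphic in the right half-plane. The Bernstein
ellipse with parameter `ξ` of `[a ^ 2, b ^ 2]` stays in that half-plane exactly when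
`ξ < (a + b) / (b - a)`, so `g` and `h` have polynomial approximations of degree `N` on
`[a ^ 2, b ^ 2]` with error `O(ξ⁻¹ ^ N)`, and `f` then has approximations of degree `2 N + 1` with
the same error.

The approximation of `g` and `h` is the truncated Chebyshev series. Composing with the Joukowski
map `J` turns a function `φ` holomorphic near the ellipse into `G = φ ∘ J`, holomorphic on an
annulus and invariant under `w ↦ w⁻¹`; the invariance lets one Cauchy integral over the outer
circle give both halves of the Laurent series of `G`, and its coefficients decay like `ξ⁻¹ ^ n`.
-/

open Complex Metric Set Filter Topology Polynomial
open scoped Real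

section CircleIntegrals

variable {E : Type*} [NormedAddCommGroup E] [NormedSpace ℂ E]

theorem circleIntegrable_sub_inv_smul {R : ℝ} {G : ℂ → E} (hG : ContinuousOn G (sphere 0 |R|))
    {u : ℂ} (hu : u ∉ sphere 0 |R|) : CircleIntegrable (fun ζ => (ζ - u)⁻¹ • G ζ) 0 R :=
  ContinuousOn.circleIntegrable' <| ((continuousOn_id.sub continuousOn_const).inv₀
    fun ζ hζ h => hu (by rwa [← sub_eq_zero.1 (show ζ - u = 0 from h)])).smul hG

theorem circleIntegral_radius_inv (r : ℝ) (h : ℂ → E) :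
    (∮ ζ in C(0, r⁻¹), h ζ) = ∮ η in C(0, r), (η⁻¹) ^ 2 • h η⁻¹ := by
  rcases eq_or_ne r 0 with rfl | hr
  · simp
  set F : ℝ → E := fun θ => deriv (circleMap 0 r⁻¹) θ • h (circleMap 0 r⁻¹ θ)
  have hinv : ∀ θ : ℝ, (circleMap 0 r θ)⁻¹ = circleMap 0 r⁻¹ (-θ) := fun θ => by
    simp only [circleMap, zero_add, mul_inv, ← Complex.exp_neg]
    push_cast
    ring_nf
  have hF : Function.Periodic F (2 * π) := fun θ => by
    simp only [F, deriv_circleMap, periodic_circleMap 0 r⁻¹ θ]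
  calc (∮ ζ in C(0, r⁻¹), h ζ) = ∫ θ in 0..2 * π, F θ := rfl
    _ = ∫ θ in -(2 * π)..0, F θ := by simpa using hF.intervalIntegral_add_eq 0 (-(2 * π))
    _ = ∫ θ in 0..2 * π, F (-θ) := by simp [intervalIntegral.integral_comp_neg]
    _ = ∮ η in C(0, r), (η⁻¹) ^ 2 • h η⁻¹ := by
        refine intervalIntegral.integral_congr fun θ _ => ?_
        have hθ : circleMap 0 r θ ≠ 0 := circleMap_ne_center hr
        simp only [F, deriv_circleMap, ← hinv, smul_smul]
        congr 1
        field_simp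

/-- The inner part of the Laurent series, the integral over `C(0, ρ⁻¹)`, becomes an integral over
`C(0, ρ)` after the substitution `ζ ↦ ζ⁻¹`, which leaves `G` unchanged. -/
theorem circleIntegral_radius_inv_sub_inv_smul {ρ : ℝ} (hρ : 0 < ρ) {G : ℂ → E}
    (hsymm : ∀ w ≠ 0, G w⁻¹ = G w) (hG : ContinuousOn G (sphere 0 ρ)) {w : ℂ} (hw : ρ⁻¹ < ‖w‖) :
    (∮ ζ in C(0, ρ⁻¹), (ζ - w)⁻¹ • G ζ) =
      (∮ ζ in C(0, ρ), (ζ - 0)⁻¹ • G ζ) - ∮ ζ in C(0, ρ), (ζ - w⁻¹)⁻¹ • G ζ := by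
  have hw0 : w ≠ 0 := norm_pos_iff.1 ((inv_pos.2 hρ).trans hw)
  have hρw : 1 < ρ * ‖w‖ := by
    simpa [mul_inv_cancel₀ hρ.ne'] using mul_lt_mul_of_pos_left hw hρ
  have hG' : ContinuousOn G (sphere 0 |ρ|) := by rwa [abs_of_pos hρ]
  have h0 : (0 : ℂ) ∉ sphere 0 |ρ| := by simp [abs_of_pos hρ, hρ.ne]
  have hwinv : w⁻¹ ∉ sphere (0 : ℂ) |ρ| := fun h => by
    rw [mem_sphere_zero_iff_norm, abs_of_pos hρ, norm_inv] at h
    rw [← h, inv_mul_cancel₀ (norm_ne_zero_iff.2 hw0)] at hρw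
    exact lt_irrefl _ hρw
  rw [circleIntegral_radius_inv, ← circleIntegral.integral_sub
    (circleIntegrable_sub_inv_smul hG' h0) (circleIntegrable_sub_inv_smul hG' hwinv)]
  refine circleIntegral.integral_congr hρ.le fun η hη => ?_
  have hη : ‖η‖ = ρ := by simpa using hη
  have hη0 : η ≠ 0 := by rintro rfl; simp [hρ.ne] at hη
  have hηw : η * w ≠ 1 := fun h => by
    rw [← hη, ← norm_mul, h, norm_one] at hρw
    exact lt_irrefl _ hρw
  have h1 : 1 - η * w ≠ 0 := sub_ne_zero.2 hηw.symm
  have h2 : η * w - 1 ≠ 0 := sub_ne_zero.2 hηw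
  simp only [hsymm η hη0, smul_smul, ← sub_smul]
  rw [show η⁻¹ - w = (1 - η * w) / η by field_simp, show η - w⁻¹ = (η * w - 1) / w by field_simp]
  congr 1
  field_simp
  ring

noncomputable def cauchyIntegral (G : ℂ → E) (R : ℝ) (u : ℂ) : E :=
  (2 * π * I : ℂ)⁻¹ • ∮ ζ in C(0, R), (ζ - u)⁻¹ • G ζ

theorem exists_norm_cauchyIntegral_sub_sum_le {ρ : ℝ} (hρ : 1 < ρ) {G : ℂ → E}
    (hG : CircleIntegrable G 0 ρ) : ∃ M, ∀ u : ℂ, ‖u‖ ≤ 1 → ∀ N : ℕ,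
      ‖cauchyIntegral G ρ u - ∑ n ∈ Finset.range N, u ^ n • (cauchyPowerSeries G 0 ρ).coeff n‖
        ≤ M * ρ⁻¹ ^ N := by
  set M₀ := (2 * π)⁻¹ * ∫ θ in 0..2 * π, ‖G (circleMap 0 ρ θ)‖
  refine ⟨M₀ / (1 - ρ⁻¹), fun u hu N => ?_⟩
  have hsum : HasSum (fun n => u ^ n • (cauchyPowerSeries G 0 ρ).coeff n)
      (cauchyIntegral G ρ u) := by
    have := hasSum_cauchyPowerSeries_integral hG (hu.trans_lt hρ)
    simp only [zero_add, FormalMultilinearSeries.apply_eq_pow_smul_coeff] at this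
    exact this
  have hbound : ∀ n, ‖u ^ n • (cauchyPowerSeries G 0 ρ).coeff n‖ ≤ M₀ * ρ⁻¹ ^ n := fun n =>
    calc _ ≤ ‖(cauchyPowerSeries G 0 ρ).coeff n‖ := by
          rw [norm_smul, norm_pow]
          exact mul_le_of_le_one_left (norm_nonneg _) (pow_le_one₀ (norm_nonneg _) hu)
      _ = ‖cauchyPowerSeries G 0 ρ n‖ := (FormalMultilinearSeries.norm_apply_eq_norm_coef ..).symm
      _ ≤ M₀ * ρ⁻¹ ^ n := by
          simpa only [abs_of_pos (one_pos.trans hρ)] using norm_cauchyPowerSeries_le G 0 ρ n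
  rw [norm_sub_rev, div_mul_eq_mul_div]
  exact norm_sub_le_of_geometric_bound_of_hasSum (inv_lt_one_of_one_lt₀ hρ) hbound hsum N

variable [CompleteSpace E]

theorem circleIntegral_sub_inv_of_notMem_closedBall {r : ℝ} (hr : 0 ≤ r) {w : ℂ}
    (hw : w ∉ closedBall 0 r) : (∮ ζ in C(0, r), (ζ - w)⁻¹) = 0 := by
  have hne : ∀ ζ ∈ closedBall (0 : ℂ) r, ζ - w ≠ 0 := fun ζ hζ h => hw (sub_eq_zero.1 h ▸ hζ)
  exact circleIntegral_eq_zero_of_differentiable_on_off_countable hr countable_empty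
    ((continuousOn_id.sub continuousOn_const).inv₀ hne)
    fun z hz => (differentiableAt_id.sub_const w).inv (hne z (ball_subset_closedBall hz.1))

theorem mem_nhds_of_mem_annulus {r R : ℝ} {z : ℂ} (hz : z ∈ ball 0 R \ closedBall 0 r) :
    closedBall 0 R \ ball 0 r ∈ 𝓝 z :=
  mem_of_superset ((isOpen_ball.sdiff isClosed_closedBall).mem_nhds hz)
    (sdiff_subset_sdiff ball_subset_closedBall ball_subset_closedBall)

theorem circleIntegral_sub_inv_smul_sub_eq_of_differentiableOn_annulus {r R : ℝ} (hr : 0 < r)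
    {G : ℂ → E} (hG : DifferentiableOn ℂ G (closedBall 0 R \ ball 0 r)) {w : ℂ}
    (hw : w ∈ ball 0 R \ closedBall 0 r) :
    (∮ ζ in C(0, R), (ζ - w)⁻¹ • G ζ) - (∮ ζ in C(0, r), (ζ - w)⁻¹ • G ζ) =
      (2 * π * I) • G w := by
  have hwr : r < ‖w‖ := by simpa using hw.2
  have hwR : ‖w‖ < R := by simpa using hw.1
  -- Cauchy–Goursat applies to the difference quotient `dslope G w`, holomorphic on the annulus.
  have hslope : ContinuousOn (dslope G w) (closedBall 0 R \ ball 0 r) :=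
    (continuousOn_dslope (mem_nhds_of_mem_annulus hw)).2
      ⟨hG.continuousOn, hG.differentiableAt (mem_nhds_of_mem_annulus hw)⟩
  have hsplit : ∀ t, r ≤ t → t ≤ R → t ≠ ‖w‖ → (∮ ζ in C(0, t), (ζ - w)⁻¹ • G ζ) =
      (∮ ζ in C(0, t), dslope G w ζ) + (∮ ζ in C(0, t), (ζ - w)⁻¹) • G w := by
    intro t hrt htR htw
    have hsph : sphere (0 : ℂ) |t| ⊆ closedBall 0 R \ ball 0 r := fun ζ hζ => by
      simp_all [abs_of_pos (hr.trans_le hrt)]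
    have hwt : w ∉ sphere (0 : ℂ) |t| := by simp [abs_of_pos (hr.trans_le hrt), htw.symm]
    rw [← circleIntegral.integral_smul_const, ← circleIntegral.integral_add
      ((hslope.mono hsph).circleIntegrable') (circleIntegrable_sub_inv_smul continuousOn_const hwt)]
    refine circleIntegral.integral_congr (hr.trans_le hrt).le fun ζ hζ => ?_
    have hζw : ζ ≠ w := fun h => hwt (by simpa [abs_of_pos (hr.trans_le hrt), h] using hζ)
    simp only [dslope_of_ne _ hζw, slope_def_module, smul_sub]
    abel
  have hannulus := circleIntegral_eq_of_differentiable_on_annulus_off_countable hr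
    (hwr.trans hwR).le (countable_singleton w) hslope fun z hz =>
      (differentiableAt_dslope_of_ne hz.2).2 (hG.differentiableAt (mem_nhds_of_mem_annulus hz.1))
  rw [hsplit R (hwr.trans hwR).le le_rfl hwR.ne', hsplit r le_rfl (hwr.trans hwR).le hwr.ne,
    hannulus, circleIntegral.integral_sub_inv_of_mem_ball (by simpa using hwR),
    circleIntegral_sub_inv_of_notMem_closedBall hr.le (by simpa using hwr)]
  simp

theorem eq_cauchyIntegral_add_cauchyIntegral_inv_sub {ρ : ℝ} (hρ : 1 < ρ) {G : ℂ → E}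
    (hsymm : ∀ w ≠ 0, G w⁻¹ = G w) (hG : DifferentiableOn ℂ G (closedBall 0 ρ \ ball 0 ρ⁻¹))
    {w : ℂ} (hw : w ∈ ball 0 ρ \ closedBall 0 ρ⁻¹) :
    G w = cauchyIntegral G ρ w + cauchyIntegral G ρ w⁻¹ - cauchyIntegral G ρ 0 := by
  have hρ0 : 0 < ρ := one_pos.trans hρ
  have hsph : sphere (0 : ℂ) ρ ⊆ closedBall 0 ρ \ ball 0 ρ⁻¹ := fun ζ hζ => by
    rw [mem_sphere_zero_iff_norm] at hζ
    simp [hζ, (inv_lt_one_of_one_lt₀ hρ).le.trans hρ.le]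
  have hcauchy := circleIntegral_sub_inv_smul_sub_eq_of_differentiableOn_annulus
    (inv_pos.2 hρ0) hG hw
  rw [circleIntegral_radius_inv_sub_inv_smul hρ0 hsymm (hG.continuousOn.mono hsph)
    (by simpa using hw.2)] at hcauchy
  have h2πI : (2 * π * I : ℂ) ≠ 0 := by simp [Real.pi_ne_zero, I_ne_zero]
  rw [cauchyIntegral, cauchyIntegral, cauchyIntegral, ← smul_add, ← smul_sub,
    eq_inv_smul_iff₀ h2πI, ← hcauchy]
  abel

theorem exp_mul_I_pow_add_inv_pow (θ : ℝ) (n : ℕ) :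
    exp (θ * I) ^ n + (exp (θ * I))⁻¹ ^ n = ((2 * Real.cos (n * θ) : ℝ) : ℂ) := by
  rw [← Complex.exp_neg, ← Complex.exp_nat_mul, ← Complex.exp_nat_mul]
  push_cast
  rw [two_cos]
  ring_nf

theorem exists_norm_sub_sum_cos_smul_le {ρ : ℝ} (hρ : 1 < ρ) {G : ℂ → E}
    (hsymm : ∀ w ≠ 0, G w⁻¹ = G w) (hG : DifferentiableOn ℂ G (closedBall 0 ρ \ ball 0 ρ⁻¹)) :
    ∃ M, ∀ θ : ℝ, ∀ N : ℕ, ‖G (exp (θ * I)) -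
      (∑ n ∈ Finset.range N, (2 * Real.cos (n * θ)) • (cauchyPowerSeries G 0 ρ).coeff n
        - (cauchyPowerSeries G 0 ρ).coeff 0)‖ ≤ M * ρ⁻¹ ^ N := by
  have hρ0 : 0 < ρ := one_pos.trans hρ
  have hsph : sphere (0 : ℂ) |ρ| ⊆ closedBall 0 ρ \ ball 0 ρ⁻¹ := fun ζ hζ => by
    simp only [mem_sphere_zero_iff_norm, abs_of_pos hρ0] at hζ
    simp [hζ, (inv_lt_one_of_one_lt₀ hρ).le.trans hρ.le]
  obtain ⟨M, hM⟩ := exists_norm_cauchyIntegral_sub_sum_le hρ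
    (hG.continuousOn.mono hsph).circleIntegrable'
  refine ⟨2 * M, fun θ N => ?_⟩
  set a := (cauchyPowerSeries G 0 ρ).coeff
  set w := exp (θ * I)
  have hw : ‖w‖ = 1 := norm_exp_ofReal_mul_I θ
  have hwinv : ‖w⁻¹‖ = 1 := by rw [norm_inv, hw, inv_one]
  have hlaurent := eq_cauchyIntegral_add_cauchyIntegral_inv_sub hρ hsymm hG (w := w)
    (by simp [hw, hρ, inv_lt_one_of_one_lt₀ hρ])
  have hcenter : cauchyIntegral G ρ 0 = a 0 := by
    change _ = cauchyPowerSeries G 0 ρ 0 fun _ => 1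
    rw [cauchyPowerSeries_apply]
    simp [cauchyIntegral]
  have hcos : ∀ n : ℕ, (2 * Real.cos (n * θ)) • a n = w ^ n • a n + w⁻¹ ^ n • a n := fun n => by
    rw [← add_smul, exp_mul_I_pow_add_inv_pow, Complex.coe_smul]
  have hsplit : G w - (∑ n ∈ Finset.range N, (2 * Real.cos (n * θ)) • a n - a 0) =
      (cauchyIntegral G ρ w - ∑ n ∈ Finset.range N, w ^ n • a n) +
        (cauchyIntegral G ρ w⁻¹ - ∑ n ∈ Finset.range N, w⁻¹ ^ n • a n) := by
    rw [hlaurent, hcenter, Finset.sum_congr rfl fun n _ => hcos n, Finset.sum_add_distrib]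
    abel
  rw [hsplit, two_mul, add_mul]
  exact (norm_add_le _ _).trans (add_le_add (hM w hw.le N) (hM w⁻¹ hwinv.le N))

end CircleIntegrals

/-- The Joukowski map adapted to `[lo, hi]`: it maps the unit circle onto `[lo, hi]` and the
annulus `ρ⁻¹ ≤ ‖w‖ ≤ ρ` onto the Bernstein ellipse of `[lo, hi]` with parameter `ρ`. -/
noncomputable def joukowskiIcc (lo hi : ℝ) (w : ℂ) : ℂ :=
  (lo + hi) / 2 + (hi - lo) / 2 * ((w + w⁻¹) / 2)

theorem joukowskiIcc_inv (lo hi : ℝ) (w : ℂ) : joukowskiIcc lo hi w⁻¹ = joukowskiIcc lo hi w := by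
  rw [joukowskiIcc, joukowskiIcc, inv_inv, add_comm w⁻¹]

theorem differentiableAt_joukowskiIcc (lo hi : ℝ) {w : ℂ} (hw : w ≠ 0) :
    DifferentiableAt ℂ (joukowskiIcc lo hi) w := by
  unfold joukowskiIcc
  fun_prop (disch := exact hw)

theorem joukowskiIcc_exp_mul_I (lo hi θ : ℝ) :
    joukowskiIcc lo hi (exp (θ * I)) = ((lo + hi) / 2 + (hi - lo) / 2 * Real.cos θ : ℝ) := by
  rw [joukowskiIcc, ← Complex.exp_neg, ← neg_mul, ← two_cos]
  push_cast
  ring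

theorem re_joukowskiIcc (lo hi : ℝ) (w : ℂ) :
    (joukowskiIcc lo hi w).re = (lo + hi) / 2 + (hi - lo) / 4 * (w + w⁻¹).re := by
  rw [joukowskiIcc, show ((lo : ℂ) + hi) / 2 + (hi - lo) / 2 * ((w + w⁻¹) / 2) =
    ((lo + hi) / 2 : ℝ) + ((hi - lo) / 4 : ℝ) * (w + w⁻¹) by push_cast; ring, add_re, ofReal_re,
    re_ofReal_mul]

theorem add_inv_le_add_inv {x y : ℝ} (hx : 0 < x) (hxy : x ≤ y) (h : 1 ≤ x * y) :
    x + x⁻¹ ≤ y + y⁻¹ := by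
  have hy : 0 < y := hx.trans_le hxy
  have : y + y⁻¹ - (x + x⁻¹) = (y - x) * (x * y - 1) / (x * y) := by field_simp; ring
  have : 0 ≤ (y - x) * (x * y - 1) / (x * y) := by
    apply div_nonneg (mul_nonneg _ _) (mul_pos hx hy).le <;> linarith
  linarith

theorem add_inv_lt_add_inv {x y : ℝ} (hx : 0 < x) (hxy : x < y) (h : 1 < x * y) :
    x + x⁻¹ < y + y⁻¹ := by
  have hy : 0 < y := hx.trans hxy
  have : y + y⁻¹ - (x + x⁻¹) = (y - x) * (x * y - 1) / (x * y) := by field_simp; ring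
  have : 0 < (y - x) * (x * y - 1) / (x * y) := by
    apply div_pos (mul_pos _ _) (mul_pos hx hy) <;> linarith
  linarith

theorem neg_add_inv_le_re_add_inv {ρ : ℝ} {w : ℂ} (hw : w ≠ 0) (h₁ : ρ⁻¹ ≤ ‖w‖)
    (h₂ : ‖w‖ ≤ ρ) : -(ρ + ρ⁻¹) ≤ (w + w⁻¹).re := by
  have hw0 : 0 < ‖w‖ := norm_pos_iff.2 hw
  have hρ : ‖w‖ + ‖w‖⁻¹ ≤ ρ + ρ⁻¹ := add_inv_le_add_inv hw0 h₂ <| by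
    have hρ0 : 0 < ρ := hw0.trans_le h₂
    rw [← inv_mul_cancel₀ hρ0.ne']
    exact mul_le_mul_of_nonneg_right h₁ hρ0.le
  have h1 := neg_abs_le w.re
  have h2 := neg_abs_le w⁻¹.re
  have h3 := abs_re_le_norm w
  have h4 := abs_re_le_norm w⁻¹
  rw [norm_inv] at h4
  rw [add_re]
  linarith

/-- `(a + b) / (b - a)` is the parameter of the Bernstein ellipse of `[a ^ 2, b ^ 2]` through
`0`. -/
theorem re_joukowskiIcc_sq_pos {a b ρ : ℝ} (ha : 0 < a) (hab : a < b) (hρ : 1 ≤ ρ)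
    (hρab : ρ < (a + b) / (b - a)) {w : ℂ} (h₁ : ρ⁻¹ ≤ ‖w‖) (h₂ : ‖w‖ ≤ ρ) :
    0 < (joukowskiIcc (a ^ 2) (b ^ 2) w).re := by
  have hba : 0 < b - a := by linarith
  have hw : w ≠ 0 := by rintro rfl; simp at h₁; linarith
  have hX1 : 1 < (a + b) / (b - a) := (one_lt_div hba).2 (by linarith)
  have hX : ρ + ρ⁻¹ < (a + b) / (b - a) + ((a + b) / (b - a))⁻¹ :=
    add_inv_lt_add_inv (by linarith) hρab (by nlinarith)
  have hXval : (a + b) / (b - a) + ((a + b) / (b - a))⁻¹ =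
      2 * (a ^ 2 + b ^ 2) / (b ^ 2 - a ^ 2) := by
    have : a + b ≠ 0 := by linarith
    have : b ^ 2 - a ^ 2 ≠ 0 := by nlinarith
    field_simp
    ring
  rw [hXval, lt_div_iff₀ (by nlinarith)] at hX
  rw [re_joukowskiIcc]
  nlinarith [mul_le_mul_of_nonneg_left (neg_add_inv_le_re_add_inv hw h₁ h₂)
    (by nlinarith : 0 ≤ (b ^ 2 - a ^ 2) / 4)]

theorem exists_natDegree_le_eval_cos_eq (c : ℕ → ℝ) (N : ℕ) : ∃ P : ℝ[X], P.natDegree ≤ N ∧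
    ∀ θ : ℝ, P.eval (Real.cos θ) = ∑ n ∈ Finset.range N, c n * Real.cos (n * θ) := by
  refine ⟨∑ n ∈ Finset.range N, C (c n) * Chebyshev.T ℝ n, ?_, fun θ => ?_⟩
  · refine natDegree_sum_le_of_forall_le _ _ fun n hn => (natDegree_C_mul_le _ _).trans ?_
    simpa [Chebyshev.natDegree_T] using (Finset.mem_range.1 hn).le
  · simp [eval_finsetSum, Chebyshev.T_real_cos]

theorem differentiableOn_comp_joukowskiIcc {lo hi ρ : ℝ} (hρ : 0 < ρ) {φ : ℂ → ℂ}
    (hφ : ∀ w : ℂ, ρ⁻¹ ≤ ‖w‖ → ‖w‖ ≤ ρ → DifferentiableAt ℂ φ (joukowskiIcc lo hi w)) :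
    DifferentiableOn ℂ (fun w => φ (joukowskiIcc lo hi w)) (closedBall 0 ρ \ ball 0 ρ⁻¹) :=
  fun w hw => by
    have hw' : ρ⁻¹ ≤ ‖w‖ ∧ ‖w‖ ≤ ρ := by simpa [and_comm] using hw
    have hw0 : w ≠ 0 := by
      rintro rfl
      exact absurd hw'.1 (by simpa using hρ)
    exact ((hφ w hw'.1 hw'.2).comp w
      (differentiableAt_joukowskiIcc lo hi hw0)).differentiableWithinAt

theorem exists_polynomial_approx_of_differentiableAt_joukowskiIcc {lo hi ρ : ℝ} (hlohi : lo < hi)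
    (hρ : 1 < ρ) {φ : ℂ → ℂ}
    (hφ : ∀ w : ℂ, ρ⁻¹ ≤ ‖w‖ → ‖w‖ ≤ ρ → DifferentiableAt ℂ φ (joukowskiIcc lo hi w)) :
    ∃ M, ∀ N : ℕ, ∃ p : ℝ[X], p.natDegree ≤ N ∧
      ∀ x ∈ Icc lo hi, |(φ x).re - p.eval x| ≤ M * ρ⁻¹ ^ N := by
  set G : ℂ → ℂ := fun w => φ (joukowskiIcc lo hi w)
  obtain ⟨M, hM⟩ := exists_norm_sub_sum_cos_smul_le hρ
    (fun w _ => by simp only [joukowskiIcc_inv])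
    (differentiableOn_comp_joukowskiIcc (one_pos.trans hρ) hφ)
  set a := (cauchyPowerSeries G 0 ρ).coeff
  set q : ℝ[X] := C (2 / (hi - lo)) * (X - C ((lo + hi) / 2))
  refine ⟨M, fun N => ?_⟩
  obtain ⟨P, hPdeg, hP⟩ := exists_natDegree_le_eval_cos_eq (fun n => 2 * (a n).re) N
  refine ⟨(P - C (a 0).re).comp q, ?_, fun x hx => ?_⟩
  · have hq : q.natDegree ≤ 1 := (natDegree_C_mul_le _ _).trans (natDegree_X_sub_C_le _)
    have hP' : (P - C (a 0).re).natDegree ≤ N :=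
      (natDegree_sub_le _ _).trans (max_le hPdeg (by simp))
    exact natDegree_comp_le.trans (by nlinarith)
  · have hlohi' : 0 < hi - lo := sub_pos.2 hlohi
    have hq : q.eval x ∈ Icc (-1) 1 := by
      have : q.eval x = (2 * x - (lo + hi)) / (hi - lo) := by
        simp only [q, eval_mul, eval_C, eval_sub, eval_X]
        ring
      rw [this, mem_Icc, le_div_iff₀ hlohi', div_le_iff₀ hlohi']
      constructor <;> linarith [hx.1, hx.2]
    set θ := Real.arccos (q.eval x)
    have hcos : Real.cos θ = q.eval x := Real.cos_arccos hq.1 hq.2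
    have hx : joukowskiIcc lo hi (exp (θ * I)) = x := by
      rw [joukowskiIcc_exp_mul_I, hcos]
      simp only [q, eval_mul, eval_C, eval_sub, eval_X]
      field_simp
      push_cast
      ring
    set S := ∑ n ∈ Finset.range N, (2 * Real.cos (n * θ)) • a n - a 0
    calc |(φ x).re - ((P - C (a 0).re).comp q).eval x| = |(G (exp (θ * I)) - S).re| := by
          rw [eval_comp, ← hcos, eval_sub, eval_C, hP, sub_re, sub_re, re_sum]
          simp only [G, hx, smul_re, smul_eq_mul, mul_right_comm 2 _ (Real.cos _)]
      _ ≤ ‖G (exp (θ * I)) - S‖ := abs_re_le_norm _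
      _ ≤ M * ρ⁻¹ ^ N := hM θ N

theorem exists_even_odd_decomposition {f₁ f₂ : ℂ → ℂ}
    (hf₁ : DifferentiableOn ℂ f₁ {z | z.re < 0}) (hf₂ : DifferentiableOn ℂ f₂ {z | 0 < z.re}) :
    ∃ g h : ℂ → ℂ, DifferentiableOn ℂ g {z | 0 < z.re} ∧ DifferentiableOn ℂ h {z | 0 < z.re} ∧
      ∀ z : ℂ, 0 < z.re →
        f₂ z = g (z ^ 2) + z * h (z ^ 2) ∧ f₁ (-z) = g (z ^ 2) - z * h (z ^ 2) := by
  set r : ℂ → ℂ := fun y => y ^ (2⁻¹ : ℂ)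
  have hr_re : ∀ y ∈ {z : ℂ | 0 < z.re}, 0 < (r y).re := fun y hy => by
    rw [cpow_inv_two_re, Real.sqrt_pos]
    linarith [norm_nonneg y, show 0 < y.re from hy]
  have hr : DifferentiableOn ℂ r {z | 0 < z.re} := fun y hy =>
    (differentiableAt_id.cpow_const (mem_slitPlane_iff.2 (Or.inl hy))).differentiableWithinAt
  have hf₂r : DifferentiableOn ℂ (fun y => f₂ (r y)) {z | 0 < z.re} :=
    hf₂.comp hr hr_re
  have hf₁r : DifferentiableOn ℂ (fun y => f₁ (-r y)) {z | 0 < z.re} :=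
    hf₁.comp hr.neg fun y hy => by simpa using hr_re y hy
  refine ⟨fun y => (f₂ (r y) + f₁ (-r y)) / 2, fun y => (f₂ (r y) - f₁ (-r y)) / (2 * r y),
    (hf₂r.add hf₁r).div_const 2, (hf₂r.sub hf₁r).div (hr.const_mul 2)
      fun y hy => mul_ne_zero two_ne_zero fun h => by simpa [h] using hr_re y hy,
    fun z hz => ?_⟩
  have hz0 : z ≠ 0 := fun h => by simp [h] at hz
  simp only [r, sq_cpow_two_inv hz]
  constructor <;> field_simp <;> ring

theorem abs_mem_Icc_of_mem_union {a b x : ℝ} (ha : 0 ≤ a) (hx : x ∈ Icc (-b) (-a) ∪ Icc a b) :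
    |x| ∈ Icc a b := by
  rcases hx with ⟨h₁, h₂⟩ | ⟨h₁, h₂⟩
  · rw [abs_of_nonpos (by linarith)]; constructor <;> linarith
  · rw [abs_of_nonneg (by linarith)]; exact ⟨h₁, h₂⟩

theorem ofReal_eq_even_add_mul_odd {a b : ℝ} (ha : 0 < a) {f : ℝ → ℝ} {f₁ f₂ g h : ℂ → ℂ}
    (hf₁f : ∀ x ∈ Icc (-b) (-a), f₁ x = f x) (hf₂f : ∀ x ∈ Icc a b, f₂ x = f x)
    (hgh : ∀ z : ℂ, 0 < z.re →
      f₂ z = g (z ^ 2) + z * h (z ^ 2) ∧ f₁ (-z) = g (z ^ 2) - z * h (z ^ 2))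
    {x : ℝ} (hx : x ∈ Icc (-b) (-a) ∪ Icc a b) :
    (f x : ℂ) = g (x ^ 2 : ℝ) + x * h (x ^ 2 : ℝ) := by
  rcases hx with hx | hx
  · have h₁ := (hgh (-x) (by simp; linarith [hx.2])).2
    rw [neg_neg, neg_sq] at h₁
    rw [← hf₁f x hx, h₁]
    push_cast
    ring
  · rw [← hf₂f x hx, (hgh x (by simp; linarith [hx.1])).1]
    push_cast
    ring

theorem bestApproxError_le {f : ℝ → ℝ} {S : Set ℝ} (hS : S.Nonempty) {k : ℕ} {p : ℝ[X]}
    (hp : p.natDegree ≤ k) {ε : ℝ} (hε : ∀ x ∈ S, |f x - p.eval x| ≤ ε) :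
    bestApproxError f S k ≤ ε := by
  obtain ⟨x₀, hx₀⟩ := hS
  have hbdd : BddBelow {e : ℝ | ∃ p : ℝ[X], p.natDegree ≤ k ∧
      e = sSup ((fun x => |f x - p.eval x|) '' S)} := by
    refine ⟨0, fun e ⟨q, _, he⟩ => he ▸ Real.sSup_nonneg ?_⟩
    rintro _ ⟨x, _, rfl⟩
    exact abs_nonneg _
  refine (csInf_le hbdd ⟨p, hp, rfl⟩).trans (Real.sSup_le ?_ ((abs_nonneg _).trans (hε x₀ hx₀)))
  rintro _ ⟨x, hx, rfl⟩
  exact hε x hx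

theorem bestApproxError_le_of_eq_even_add_mul_odd {f g h : ℝ → ℝ} {S T : Set ℝ}
    (hS : S.Nonempty) {B : ℝ} (hB : ∀ x ∈ S, |x| ≤ B) (hST : ∀ x ∈ S, x ^ 2 ∈ T)
    (hfgh : ∀ x ∈ S, f x = g (x ^ 2) + x * h (x ^ 2)) {P Q : ℝ[X]} {εg εh : ℝ}
    (hP : ∀ y ∈ T, |g y - P.eval y| ≤ εg) (hQ : ∀ y ∈ T, |h y - Q.eval y| ≤ εh) {k : ℕ}
    (hPk : 2 * P.natDegree ≤ k) (hQk : 2 * Q.natDegree + 1 ≤ k) :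
    bestApproxError f S k ≤ εg + B * εh := by
  refine bestApproxError_le hS (p := P.comp (X ^ 2) + X * Q.comp (X ^ 2)) ?_ fun x hx => ?_
  · refine (natDegree_add_le _ _).trans (max_le ?_ ?_)
    · exact natDegree_comp_le.trans (by simpa [mul_comm] using hPk)
    · refine natDegree_mul_le.trans ?_
      have := natDegree_comp_le (p := Q) (q := X ^ 2)
      simp only [natDegree_X_pow] at this
      linarith [natDegree_X_le (R := ℝ)]
  · have hgx := hP _ (hST x hx)
    have hhx := hQ _ (hST x hx)
    calc |f x - (P.comp (X ^ 2) + X * Q.comp (X ^ 2)).eval x|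
        = |(g (x ^ 2) - P.eval (x ^ 2)) + x * (h (x ^ 2) - Q.eval (x ^ 2))| := by
          rw [hfgh x hx]; simp only [eval_add, eval_mul, eval_comp, eval_pow, eval_X]; ring_nf
      _ ≤ |g (x ^ 2) - P.eval (x ^ 2)| + |x| * |h (x ^ 2) - Q.eval (x ^ 2)| :=
          (abs_add_le _ _).trans_eq (by rw [abs_mul])
      _ ≤ εg + B * εh := add_le_add hgx
          (mul_le_mul (hB x hx) hhx (abs_nonneg _) ((abs_nonneg x).trans (hB x hx)))

theorem exists_le_mul_rpow_neg_half {e : ℕ → ℝ} {ξ A : ℝ} (hξ : 1 < ξ)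
    (he : ∀ k N : ℕ, 2 * N + 1 ≤ k → e k ≤ A * ξ⁻¹ ^ N) :
    ∃ C, 0 < C ∧ ∀ k : ℕ, e k ≤ C * ξ ^ (-(k : ℝ) / 2) := by
  have hξ0 : 0 < ξ := one_pos.trans hξ
  refine ⟨|A| * ξ + |e 0| + 1, by positivity, fun k => ?_⟩
  rcases Nat.eq_zero_or_pos k with rfl | hk
  · simp only [CharP.cast_eq_zero, neg_zero, zero_div, Real.rpow_zero, mul_one]
    linarith [le_abs_self (e 0), mul_nonneg (abs_nonneg A) hξ0.le]
  have hpow : ξ⁻¹ ^ ((k - 1) / 2) ≤ ξ * ξ ^ (-(k : ℝ) / 2) := by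
    rw [inv_pow, ← Real.rpow_natCast, ← Real.rpow_neg hξ0.le,
      show ξ * ξ ^ (-(k : ℝ) / 2) = ξ ^ (1 + -(k : ℝ) / 2) by rw [Real.rpow_add hξ0, Real.rpow_one]]
    refine Real.rpow_le_rpow_of_exponent_le hξ.le ?_
    have : (k : ℝ) ≤ 2 * ((k - 1) / 2 : ℕ) + 2 := by
      exact_mod_cast (by omega : k ≤ 2 * ((k - 1) / 2) + 2)
    linarith
  calc e k ≤ A * ξ⁻¹ ^ ((k - 1) / 2) := he k _ (by omega)
    _ ≤ |A| * (ξ * ξ ^ (-(k : ℝ) / 2)) :=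
        (mul_le_mul_of_nonneg_right (le_abs_self A) (by positivity)).trans
          (mul_le_mul_of_nonneg_left hpow (abs_nonneg A))
    _ ≤ (|A| * ξ + |e 0| + 1) * ξ ^ (-(k : ℝ) / 2) := by
        rw [← mul_assoc]
        exact mul_le_mul_of_nonneg_right (by linarith [abs_nonneg (e 0)]) (by positivity)

theorem stmt_12_general (a b : ℝ) (ha : 0 < a) (hab : a < b)
    (f : ℝ → ℝ)
    (f₁ f₂ : ℂ → ℂ)
    (hf₁ : AnalyticOnNhd ℂ f₁ {z : ℂ | z.re < 0})
    (hf₂ : AnalyticOnNhd ℂ f₂ {z : ℂ | 0 < z.re})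
    (hf₁f : ∀ x ∈ Set.Icc (-b) (-a), f₁ ((x : ℝ) : ℂ) = ((f x : ℝ) : ℂ))
    (hf₂f : ∀ x ∈ Set.Icc a b, f₂ ((x : ℝ) : ℂ) = ((f x : ℝ) : ℂ))
    (ξ : ℝ) (hξ1 : 1 < ξ) (hξ2 : ξ < (a + b) / (b - a)) :
    ∃ C : ℝ, 0 < C ∧ ∀ k : ℕ,
      bestApproxError f (Set.Icc (-b) (-a) ∪ Set.Icc a b) k ≤ C * ξ ^ (-(k : ℝ) / 2) := by
  obtain ⟨g, h, hg, hh, hgh⟩ :=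
    exists_even_odd_decomposition hf₁.differentiableOn hf₂.differentiableOn
  have hJ : ∀ φ : ℂ → ℂ, DifferentiableOn ℂ φ {z | 0 < z.re} → ∀ w : ℂ, ξ⁻¹ ≤ ‖w‖ → ‖w‖ ≤ ξ →
      DifferentiableAt ℂ φ (joukowskiIcc (a ^ 2) (b ^ 2) w) := fun φ hφ w h₁ h₂ =>
    hφ.differentiableAt <| (isOpen_lt continuous_const continuous_re).mem_nhds <|
      re_joukowskiIcc_sq_pos ha hab hξ1.le hξ2 h₁ h₂
  have hsq : a ^ 2 < b ^ 2 := by nlinarith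
  obtain ⟨Mg, hMg⟩ := exists_polynomial_approx_of_differentiableAt_joukowskiIcc hsq hξ1 (hJ g hg)
  obtain ⟨Mh, hMh⟩ := exists_polynomial_approx_of_differentiableAt_joukowskiIcc hsq hξ1 (hJ h hh)
  have hI : ∀ x ∈ Icc (-b) (-a) ∪ Icc a b, |x| ∈ Icc a b := fun x hx =>
    abs_mem_Icc_of_mem_union ha.le hx
  refine exists_le_mul_rpow_neg_half hξ1 (A := Mg + b * Mh) fun k N hk => ?_
  obtain ⟨P, hPN, hP⟩ := hMg N
  obtain ⟨Q, hQN, hQ⟩ := hMh N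
  rw [add_mul, mul_assoc]
  refine bestApproxError_le_of_eq_even_add_mul_odd ⟨a, Or.inr ⟨le_rfl, hab.le⟩⟩
    (fun x hx => (hI x hx).2) (fun x hx => ?_) (fun x hx => ?_) hP hQ (by omega) (by omega)
  · rw [← sq_abs x]
    exact ⟨pow_le_pow_left₀ ha.le (hI x hx).1 2, pow_le_pow_left₀ (abs_nonneg x) (hI x hx).2 2⟩
  · have := congrArg re (ofReal_eq_even_add_mul_odd ha hf₁f hf₂f hgh hx)
    simpa using this

/-- Chui–Hasson-type bound: let `0 < a < b`, `I = [−b,−a] ∪ [a,b]`, and let `f` be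
continuous on `I`, equal on `[−b,−a]` to the restriction of a function `f₁` analytic on the
open left half-plane and equal on `[a,b]` to the restriction of a function `f₂` analytic on
the open right half-plane. Then for every `1 < ξ < ξ̄ = (a+b)/(b−a)` there is `C > 0`,
independent of `k`, with `E_k(f,I) ≤ C·ξ^{−k/2}` for all `k ≥ 0`. -/
theorem stmt_12 (a b : ℝ) (ha : 0 < a) (hab : a < b)
    (f : ℝ → ℝ)
    (hf : ContinuousOn f (Set.Icc (-b) (-a) ∪ Set.Icc a b))
    (f₁ f₂ : ℂ → ℂ)
    (hf₁ : AnalyticOnNhd ℂ f₁ {z : ℂ | z.re < 0})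
    (hf₂ : AnalyticOnNhd ℂ f₂ {z : ℂ | 0 < z.re})
    (hf₁f : ∀ x ∈ Set.Icc (-b) (-a), f₁ ((x : ℝ) : ℂ) = ((f x : ℝ) : ℂ))
    (hf₂f : ∀ x ∈ Set.Icc a b, f₂ ((x : ℝ) : ℂ) = ((f x : ℝ) : ℂ))
    (ξ : ℝ) (hξ1 : 1 < ξ) (hξ2 : ξ < (a + b) / (b - a)) :
    ∃ C : ℝ, 0 < C ∧ ∀ k : ℕ,
      bestApproxError f (Set.Icc (-b) (-a) ∪ Set.Icc a b) k ≤ C * ξ ^ (-(k : ℝ) / 2) :=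
  stmt_12_general a b ha hab f f₁ f₂ hf₁ hf₂ hf₁f hf₂f ξ hξ1 hξ2
end

section
/- Let A and B be n×n complex matrices whose entries satisfy |A_{ij}| ≤ c₁·e^{−α|i−j|} and |B_{ij}| ≤ c₂·e^{−α|i−j|} for all i, j, with c₁, c₂ > 0 and α > 0. Then for every α′ with 0 < α′ < α, setting ω = α − α′, the product C = AB satisfies |C_{ij}| ≤ c·e^{−α′|i−j|} for all i, j, with c = c₁c₂·(1 + e^{−ω})/(1 − e^{−ω}); in particular c does not depend on n. -/
/-!
Write `ω = α - α'` and `q = e^{-ω}`. The triangle inequality gives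
`α'|i-j| + ω|i-k| ≤ α|i-k| + α|k-j|`, so each term of `(AB)ᵢⱼ = ∑ₖ AᵢₖBₖⱼ` is at most
`c₁c₂ e^{-α'|i-j|} q^|i-k|`. Summed over `k`, the powers `q^|i-k|` form two geometric series
(`k ≤ i` and `k > i`) of total at most `1/(1-q) + q/(1-q)`, whatever `n` is.
-/

open Finset Real

theorem Nat.cast_dist_eq_abs_sub (m n : ℕ) : (Nat.dist m n : ℝ) = |(m : ℝ) - n| := by
  rcases le_total m n with h | h
  · rw [Nat.dist_eq_sub_of_le h, Nat.cast_sub h, abs_sub_comm, abs_of_nonneg (by simpa using h)]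
  · rw [Nat.dist_eq_sub_of_le_right h, Nat.cast_sub h, abs_of_nonneg (by simpa using h)]

theorem geom_sum_le_inv_one_sub {q : ℝ} (hq0 : 0 ≤ q) (hq1 : q < 1) (N : ℕ) :
    ∑ m ∈ range N, q ^ m ≤ (1 - q)⁻¹ := by
  simpa using geom_sum_Ico_le_of_lt_one (m := 0) (n := N) hq0 hq1

theorem sum_range_pow_dist_le {q : ℝ} (hq0 : 0 ≤ q) (hq1 : q < 1) (n i : ℕ) :
    ∑ k ∈ range n, q ^ Nat.dist i k ≤ (1 + q) / (1 - q) := by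
  have left : ∑ k ∈ range (i + 1), q ^ Nat.dist i k = ∑ m ∈ range (i + 1), q ^ m := by
    rw [← sum_range_reflect]
    refine sum_congr rfl fun m hm => ?_
    rw [mem_range] at hm
    rw [Nat.dist_eq_sub_of_le_right (by omega)]
    congr 1
    omega
  have right : ∑ m ∈ range n, q ^ Nat.dist i (i + 1 + m) = q * ∑ m ∈ range n, q ^ m := by
    rw [mul_sum]
    refine sum_congr rfl fun m _ => ?_
    rw [Nat.dist_eq_sub_of_le (by omega), show i + 1 + m - i = m + 1 by omega, pow_succ']
  calc ∑ k ∈ range n, q ^ Nat.dist i k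
      ≤ ∑ k ∈ range (i + 1 + n), q ^ Nat.dist i k :=
        sum_le_sum_of_subset_of_nonneg (range_mono (by omega)) fun _ _ _ => by positivity
    _ = ∑ m ∈ range (i + 1), q ^ m + q * ∑ m ∈ range n, q ^ m := by
        rw [sum_range_add, left, right]
    _ ≤ (1 - q)⁻¹ + q * (1 - q)⁻¹ := by
        gcongr <;> exact geom_sum_le_inv_one_sub hq0 hq1 _
    _ = (1 + q) / (1 - q) := by ring

theorem exp_neg_mul_abs_mul_exp_neg_mul_abs_le {α α' : ℝ} (hα'0 : 0 ≤ α') (hα' : α' ≤ α)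
    (x y z : ℝ) :
    exp (-α * |x - z|) * exp (-α * |z - y|) ≤ exp (-α' * |x - y|) * exp (-(α - α') * |x - z|) := by
  rw [← exp_add, ← exp_add, exp_le_exp]
  nlinarith [mul_le_mul_of_nonneg_left (abs_sub_le x z y) hα'0,
    mul_le_mul_of_nonneg_right hα' (abs_nonneg (z - y))]

theorem sum_exp_neg_mul_abs_mul_exp_neg_mul_abs_le {α α' : ℝ} (hα'0 : 0 ≤ α') (hα' : α' < α)
    (n i j : ℕ) :
    ∑ k ∈ range n, exp (-α * |(i : ℝ) - k|) * exp (-α * |(k : ℝ) - j|) ≤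
      (1 + exp (-(α - α'))) / (1 - exp (-(α - α'))) * exp (-α' * |(i : ℝ) - j|) := by
  have hq1 : exp (-(α - α')) < 1 := exp_lt_one_iff.mpr (by linarith)
  calc ∑ k ∈ range n, exp (-α * |(i : ℝ) - k|) * exp (-α * |(k : ℝ) - j|)
      ≤ ∑ k ∈ range n, exp (-α' * |(i : ℝ) - j|) * exp (-(α - α')) ^ Nat.dist i k := by
        refine sum_le_sum fun k _ => ?_
        rw [← exp_nat_mul, Nat.cast_dist_eq_abs_sub, mul_comm _ (-(α - α'))]
        exact exp_neg_mul_abs_mul_exp_neg_mul_abs_le hα'0 hα'.le _ _ _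
    _ ≤ exp (-α' * |(i : ℝ) - j|) * ((1 + exp (-(α - α'))) / (1 - exp (-(α - α')))) := by
        rw [← mul_sum]
        gcongr
        exact sum_range_pow_dist_le (exp_pos _).le hq1 n i
    _ = _ := mul_comm _ _

theorem Matrix.norm_mul_apply_le_sum {l m n R : Type*} [Fintype m] [NonUnitalSeminormedRing R]
    {A : Matrix l m R} {B : Matrix m n R} {a : l → m → ℝ} {b : m → n → ℝ}
    (hA : ∀ i k, ‖A i k‖ ≤ a i k) (hB : ∀ k j, ‖B k j‖ ≤ b k j) (i : l) (j : n) :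
    ‖(A * B) i j‖ ≤ ∑ k, a i k * b k j :=
  (norm_sum_le _ _).trans <| sum_le_sum fun k _ => (norm_mul_le _ _).trans <|
    mul_le_mul (hA i k) (hB k j) (norm_nonneg _) ((norm_nonneg _).trans (hA i k))

theorem stmt_14_general (n : ℕ) (c₁ c₂ α : ℝ) (hc₁ : 0 < c₁) (hc₂ : 0 < c₂)
    (A B : Matrix (Fin n) (Fin n) ℂ)
    (hA : ∀ i j : Fin n, ‖A i j‖ ≤ c₁ * Real.exp (-α * |(i : ℝ) - (j : ℝ)|))
    (hB : ∀ i j : Fin n, ‖B i j‖ ≤ c₂ * Real.exp (-α * |(i : ℝ) - (j : ℝ)|))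
    (α' : ℝ) (hα'0 : 0 < α') (hα' : α' < α) :
    ∀ i j : Fin n,
      ‖(A * B) i j‖ ≤
        (c₁ * c₂ * (1 + Real.exp (-(α - α'))) / (1 - Real.exp (-(α - α')))) *
          Real.exp (-α' * |(i : ℝ) - (j : ℝ)|) := by
  intro i j
  have decay_sum := sum_exp_neg_mul_abs_mul_exp_neg_mul_abs_le hα'0.le hα' n i j
  rw [← Fin.sum_univ_eq_sum_range (fun k => exp (-α * |(i : ℝ) - k|) * exp (-α * |(k : ℝ) - j|))]
    at decay_sum
  calc ‖(A * B) i j‖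
      ≤ ∑ k : Fin n, c₁ * exp (-α * |(i : ℝ) - k|) * (c₂ * exp (-α * |(k : ℝ) - j|)) :=
        Matrix.norm_mul_apply_le_sum hA hB i j
    _ = c₁ * c₂ * ∑ k : Fin n, exp (-α * |(i : ℝ) - k|) * exp (-α * |(k : ℝ) - j|) := by
        rw [mul_sum]
        exact sum_congr rfl fun k _ => by ring
    _ ≤ c₁ * c₂ * ((1 + exp (-(α - α'))) / (1 - exp (-(α - α'))) * exp (-α' * |(i : ℝ) - j|)) := by
        gcongr
    _ = _ := by ring

/-- If `|A_{ij}| ≤ c₁·e^{−α|i−j|}` and `|B_{ij}| ≤ c₂·e^{−α|i−j|}`, then for every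
`0 < α′ < α`, with `ω = α − α′`, the product `C = AB` satisfies
`|C_{ij}| ≤ c·e^{−α′|i−j|}` with `c = c₁c₂·(1 + e^{−ω})/(1 − e^{−ω})`, independent of `n`. -/
theorem stmt_14 (n : ℕ) (c₁ c₂ α : ℝ) (hc₁ : 0 < c₁) (hc₂ : 0 < c₂) (hα : 0 < α)
    (A B : Matrix (Fin n) (Fin n) ℂ)
    (hA : ∀ i j : Fin n, ‖A i j‖ ≤ c₁ * Real.exp (-α * |(i : ℝ) - (j : ℝ)|))
    (hB : ∀ i j : Fin n, ‖B i j‖ ≤ c₂ * Real.exp (-α * |(i : ℝ) - (j : ℝ)|))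
    (α' : ℝ) (hα'0 : 0 < α') (hα' : α' < α) :
    ∀ i j : Fin n,
      ‖(A * B) i j‖ ≤
        (c₁ * c₂ * (1 + Real.exp (-(α - α'))) / (1 - Real.exp (-(α - α')))) *
          Real.exp (-α' * |(i : ℝ) - (j : ℝ)|) :=
  stmt_14_general n c₁ c₂ α hc₁ hc₂ A B hA hB α' hα'0 hα'
end
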